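/- arXiv:2408.12444 — 4 statements merged into one kernel-verified Lean document; each statement's English description precedes it below -/
import Mathlib

section
/- Let p be a prime, ι a finite type with 2 ≤ |ι|, x : ι → F_p injective, m ∈ F_p, and for each i ∈ ι let w(i) ∈ F_p with w(i) ≠ 0 and z(i) ∈ F_p. Define the encrypted y-coordinates o(i) := w(i) · ((x(i) + m) + z(i)). Then the Lagrange interpolant through the points (x(i), w(i)⁻¹ · o(i) − z(i)) equals the polynomial X + m in F_p[X]; in particular, its constant coefficient equals m. -/
open Polynomial

theorem inv_mul_mul_add_sub_cancel {F : Type*} [Field F] {w : F} (hw : w ≠ 0) (y z : F) :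
    w⁻¹ * (w * (y + z)) - z = y := by
  rw [inv_mul_cancel_left₀ hw, add_sub_cancel_right]

theorem Lagrange.interpolate_add_const {F ι : Type*} [Field F] [DecidableEq ι] {s : Finset ι}
    {v : ι → F} (hvs : Set.InjOn v s) (hs : 2 ≤ s.card) (m : F) :
    Lagrange.interpolate s v (fun i => v i + m) = X + C m := by
  refine (Lagrange.eq_interpolate_of_eval_eq _ hvs ?_ fun i _ => by simp).symm
  rw [degree_X_add_C]
  exact_mod_cast hs

theorem stmt_1 {p : ℕ} [Fact p.Prime] {ι : Type} [Fintype ι] [DecidableEq ι]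
    (hcard : 2 ≤ Fintype.card ι) (x : ι → ZMod p) (hx : Function.Injective x)
    (m : ZMod p) (w z : ι → ZMod p) (hw : ∀ i, w i ≠ 0)
    (o : ι → ZMod p) (ho : ∀ i, o i = w i * ((x i + m) + z i)) :
    Lagrange.interpolate Finset.univ x (fun i => (w i)⁻¹ * o i - z i) = X + C m ∧
    (Lagrange.interpolate Finset.univ x (fun i => (w i)⁻¹ * o i - z i)).coeff 0 = m := by
  have hunblind : ∀ i ∈ Finset.univ, (w i)⁻¹ * o i - z i = x i + m := fun i _ => by
    rw [ho i, inv_mul_mul_add_sub_cancel (hw i)]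
  have hinterp : Lagrange.interpolate Finset.univ x (fun i => (w i)⁻¹ * o i - z i) = X + C m := by
    rw [Lagrange.interpolate_eq_of_values_eq_on _ _ hunblind]
    exact Lagrange.interpolate_add_const hx.injOn (by rwa [Finset.card_univ]) m
  exact ⟨hinterp, by rw [hinterp, coeff_add, coeff_X_zero, coeff_C_zero, zero_add]⟩
end

section
/- Let p be a prime, ι a finite type with 3 ≤ |ι|, x : ι → F_p injective, root ∈ F_p, z a natural number, and q, m : Fin z → F_p. For each i ∈ ι let w'(i) ∈ F_p with w'(i) ≠ 0 and z'(i) ∈ F_p, and define g(i) := w'(i) · ((x(i) − root) · ∑_{j} q(j)·(x(i) + m(j))) + z'(i). Then the Lagrange interpolant through the points (x(i), w'(i)⁻¹ · (g(i) − z'(i))) equals the polynomial θ(X) = (X − root) · ∑_{j} C(q(j)) · (X + C(m(j))) in F_p[X]. -/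
/-! Removing the blinding factors gives back the values θ(x i), and θ has degree at most
2 < #ι, so by uniqueness of interpolation through distinct nodes the interpolant is θ. -/

open Polynomial

theorem degree_sum_C_mul_X_add_C_le {R ι : Type*} [Semiring R] (s : Finset ι) (a b : ι → R) :
    (∑ j ∈ s, C (a j) * (X + C (b j))).degree ≤ 1 := by
  refine (degree_sum_le _ _).trans (Finset.sup_le fun j _ => ?_)
  simpa [mul_add] using degree_linear_le (a := a j) (b := a j * b j)

theorem degree_X_sub_C_mul_sum_C_mul_X_add_C_le {R ι : Type*} [Ring R] (r : R) (s : Finset ι)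
    (a b : ι → R) : ((X - C r) * ∑ j ∈ s, C (a j) * (X + C (b j))).degree ≤ 2 :=
  calc _ ≤ 1 + 1 := (degree_mul_le _ _).trans
          (add_le_add (degree_X_sub_C_le r) (degree_sum_C_mul_X_add_C_le s a b))
    _ = 2 := rfl

theorem inv_mul_sub_eq_of_eq_mul_add {K : Type*} [DivisionRing K] {w v z y : K} (hw : w ≠ 0)
    (hy : y = w * v + z) : w⁻¹ * (y - z) = v := by
  rw [hy, add_sub_cancel_right, inv_mul_cancel_left₀ hw]

theorem stmt_3 {p : ℕ} [Fact p.Prime] {ι : Type} [Fintype ι] [DecidableEq ι]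
    (hcard : 3 ≤ Fintype.card ι) (x : ι → ZMod p) (hx : Function.Injective x)
    (root : ZMod p) (z : ℕ) (q m : Fin z → ZMod p)
    (w' z' : ι → ZMod p) (hw' : ∀ i, w' i ≠ 0)
    (g : ι → ZMod p)
    (hg : ∀ i, g i = w' i * ((x i - root) * ∑ j, q j * (x i + m j)) + z' i) :
    Lagrange.interpolate Finset.univ x (fun i => (w' i)⁻¹ * (g i - z' i)) =
      (X - C root) * ∑ j, C (q j) * (X + C (m j)) := by
  have hdeg : ((X - C root) * ∑ j, C (q j) * (X + C (m j))).degree <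
      (Fintype.card ι : WithBot ℕ) :=
    calc _ ≤ 2 := degree_X_sub_C_mul_sum_C_mul_X_add_C_le _ _ _ _
      _ < Fintype.card ι := by exact_mod_cast hcard
  refine (Lagrange.eq_interpolate_of_eval_eq _ hx.injOn hdeg fun i _ => ?_).symm
  rw [inv_mul_sub_eq_of_eq_mul_add (hw' i) (hg i)]
  simp [eval_finsetSum]
end

section
/- Let p be a prime, C a finite type, and I a finite subset of C. For each u ∈ I let γ(u), w'(u), z'(u) ∈ F_p; for each u ∈ C let q(u), π(u), zb(u) ∈ F_p and w(u) ∈ F_p with w(u) ≠ 0; let a : C → C → F_p and define y(u) := (if u ∈ I then −∑_{l ∈ univ \ {u}} a(u, l) else 0) + ∑_{l ∈ I \ {u}} a(l, u). Set P := ∏_{l ∈ I} γ(l)·w'(l), and for each u ∈ C let d(u) := (q(u)·P·w(u)⁻¹) · (w(u)·(π(u) + zb(u))) + (−(q(u)·P·zb(u)) + (if u ∈ I then z'(u) else 0) + y(u)). Then ∑_{u ∈ C} d(u) = P · ∑_{u ∈ C} q(u)·π(u) + ∑_{u ∈ I} z'(u). -/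
open Finset

/-- The paper's `y u`: each mask `a l u` sent by a leader `l` to a client `u ≠ l` is added by `u`
and subtracted by `l`, so the masks cancel in the total. -/
def zeroSumMask {M C : Type*} [AddCommGroup M] [Fintype C] [DecidableEq C]
    (I : Finset C) (a : C → C → M) (u : C) : M :=
  (if u ∈ I then -∑ l ∈ univ \ {u}, a u l else 0) + ∑ l ∈ I \ {u}, a l u

theorem sum_zeroSumMask {M C : Type*} [AddCommGroup M] [Fintype C] [DecidableEq C]
    (I : Finset C) (a : C → C → M) : ∑ u, zeroSumMask I a u = 0 := by
  have received : ∑ u, ∑ l ∈ I \ {u}, a l u = ∑ l ∈ I, ∑ u ∈ univ \ {l}, a l u :=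
    sum_comm' fun u l => by simp [and_comm, eq_comm]
  simp only [zeroSumMask, sum_add_distrib, sum_ite_mem, univ_inter,
    sum_neg_distrib, received, neg_add_cancel]

theorem stmt_9_general {p : ℕ} [Fact p.Prime] {C : Type} [Fintype C] [DecidableEq C]
    (I : Finset C) (z' : C → ZMod p) (q π zb w : C → ZMod p)
    (hw : ∀ u, w u ≠ 0) (a : C → C → ZMod p)
    (y : C → ZMod p)
    (hy : ∀ u, y u = (if u ∈ I then -∑ l ∈ Finset.univ \ {u}, a u l else 0) +
      ∑ l ∈ I \ {u}, a l u)
    (P : ZMod p)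
    (d : C → ZMod p)
    (hd : ∀ u, d u = (q u * P * (w u)⁻¹) * (w u * (π u + zb u)) +
      (-(q u * P * zb u) + (if u ∈ I then z' u else 0) + y u)) :
    ∑ u, d u = P * ∑ u, q u * π u + ∑ l ∈ I, z' l := by
  have unblind : ∀ u, d u = P * (q u * π u) + (if u ∈ I then z' u else 0) + y u := fun u => by
    rw [hd, mul_assoc _ (w u)⁻¹, inv_mul_cancel_left₀ (hw u)]
    ring
  have masks_cancel : ∑ u, y u = 0 := by
    simp_rw [hy]
    exact sum_zeroSumMask I a
  rw [sum_congr rfl fun u _ => unblind u, sum_add_distrib, sum_add_distrib, ← mul_sum,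
    sum_ite_mem, univ_inter, masks_cancel, add_zero]

theorem stmt_9 {p : ℕ} [Fact p.Prime] {C : Type} [Fintype C] [DecidableEq C]
    (I : Finset C) (γ w' z' : C → ZMod p) (q π zb w : C → ZMod p)
    (hw : ∀ u, w u ≠ 0) (a : C → C → ZMod p)
    (y : C → ZMod p)
    (hy : ∀ u, y u = (if u ∈ I then -∑ l ∈ Finset.univ \ {u}, a u l else 0) +
      ∑ l ∈ I \ {u}, a l u)
    (P : ZMod p) (hP : P = ∏ l ∈ I, γ l * w' l)
    (d : C → ZMod p)
    (hd : ∀ u, d u = (q u * P * (w u)⁻¹) * (w u * (π u + zb u)) +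
      (-(q u * P * zb u) + (if u ∈ I then z' u else 0) + y u)) :
    ∑ u, d u = P * ∑ u, q u * π u + ∑ l ∈ I, z' l :=
  stmt_9_general I z' q π zb w hw a y hy P d hd
end

section
/- Let p be a prime, t a natural number, ι a finite type with t + 2 ≤ |ι|, x : ι → F_p injective, r : Fin t → F_p, n a natural number, and q, m : Fin n → F_p. For each i ∈ ι and k ∈ Fin t let w'(i, k) ∈ F_p with w'(i, k) ≠ 0 and z'(i, k) ∈ F_p, and define g(i) := (∏_{k} (x(i) − r(k)) · w'(i, k)) · (∑_{u} q(u)·(x(i) + m(u))) + ∑_{k} z'(i, k). Then the Lagrange interpolant through the points (x(i), (∏_{k} w'(i, k))⁻¹ · (g(i) − ∑_{k} z'(i, k))) equals the polynomial Θ(X) = (∏_{k} (X − C(r(k)))) · (∑_{u} C(q(u)) · (X + C(m(u)))) in F_p[X]. -/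
open Polynomial Finset

theorem natDegree_sum_C_mul_X_add_C_le {R α : Type*} [Semiring R] (s : Finset α)
    (q m : α → R) : (∑ u ∈ s, C (q u) * (X + C (m u))).natDegree ≤ 1 :=
  natDegree_sum_le_of_forall_le s _ fun _ _ =>
    (natDegree_C_mul_le _ _).trans (natDegree_add_C.trans_le natDegree_X_le)

theorem natDegree_prod_X_sub_C_mul_sum_le {R : Type*} [CommRing R] [Nontrivial R] {t n : ℕ}
    (r : Fin t → R) (q m : Fin n → R) :
    ((∏ k, (X - C (r k))) * ∑ u, C (q u) * (X + C (m u))).natDegree ≤ t + 1 := by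
  refine natDegree_mul_le.trans (add_le_add ?_ (natDegree_sum_C_mul_X_add_C_le _ q m))
  simp

theorem stmt_11 {p : ℕ} [Fact p.Prime] (t : ℕ) {ι : Type} [Fintype ι] [DecidableEq ι]
    (hcard : t + 2 ≤ Fintype.card ι) (x : ι → ZMod p) (hx : Function.Injective x)
    (r : Fin t → ZMod p) (n : ℕ) (q m : Fin n → ZMod p)
    (w' z' : ι → Fin t → ZMod p) (hw' : ∀ i k, w' i k ≠ 0)
    (g : ι → ZMod p)
    (hg : ∀ i, g i = (∏ k, (x i - r k) * w' i k) * (∑ u, q u * (x i + m u)) +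
      ∑ k, z' i k) :
    Lagrange.interpolate Finset.univ x
        (fun i => (∏ k, w' i k)⁻¹ * (g i - ∑ k, z' i k)) =
      (∏ k, (X - C (r k))) * ∑ u, C (q u) * (X + C (m u)) := by
  set Θ : (ZMod p)[X] := (∏ k, (X - C (r k))) * ∑ u, C (q u) * (X + C (m u))
  have unblind : (fun i => (∏ k, w' i k)⁻¹ * (g i - ∑ k, z' i k)) = fun i => Θ.eval (x i) := by
    funext i
    have hw : ∏ k, w' i k ≠ 0 := prod_ne_zero_iff.2 fun k _ => hw' i k
    rw [hg, add_sub_cancel_right, prod_mul_distrib, mul_right_comm, mul_comm (∏ k, w' i k)⁻¹,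
      mul_inv_cancel_right₀ hw]
    simp [Θ, eval_prod, eval_finsetSum]
  have hdeg : Θ.degree < #(univ : Finset ι) := by
    refine degree_le_natDegree.trans_lt ?_
    exact_mod_cast (natDegree_prod_X_sub_C_mul_sum_le r q m).trans_lt (by rw [card_univ]; omega)
  rw [unblind]
  exact (Lagrange.eq_interpolate hx.injOn hdeg).symm
end
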